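/- Let K be a field and let R be the subalgebra { f ∈ K[x,y] : f(x,0) is a constant } of the polynomial ring K[x,y] (equivalently, R = K·1 + y·K[x,y], the K-span of 1 and all monomials divisible by y). Then R is not finitely generated as a K-algebra. -/

import Mathlib

/-- The substitution `y ↦ 0` on `K[x,y]` (with `x = X 0`, `y = X 1`). -/
noncomputable def substY0 (K : Type*) [Field K] :
    MvPolynomial (Fin 2) K →ₐ[K] MvPolynomial (Fin 2) K :=
  MvPolynomial.aeval (fun i => if i = 0 then MvPolynomial.X 0 else 0)

/-- The subalgebra `R = { f ∈ K[x,y] : f(x,0) is a constant } = K·1 + y·K[x,y]`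
of the polynomial ring `K[x,y]`. -/
noncomputable def Rsub (K : Type*) [Field K] : Subalgebra K (MvPolynomial (Fin 2) K) :=
  Subalgebra.comap (substY0 K) ⊥

/-!
Write `ℓₙ(f)` for the coefficient of `xⁿy`. Since no element of `R` contains a monomial `xᵃ`
with `a > 0`, on `R` we have `ℓₙ(fg) = f(0) ℓₙ(g) + ℓₙ(f) g(0)`, so the elements of `R` with
`ℓₙ = 0` form a subalgebra. Finitely many generators of `R` all lie in it once `n` exceeds
their `x`-degrees, yet `xⁿy ∈ R` does not.
-/

open MvPolynomial Finsupp

section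

variable {K : Type*} [Field K]

lemma Finsupp.eq_single_zero_of_apply_one_eq_zero {d : Fin 2 →₀ ℕ} (h : d 1 = 0) :
    d = single 0 (d 0) := by
  ext i
  fin_cases i <;> simp [h]

lemma substY0_monomial (d : Fin 2 →₀ ℕ) (c : K) :
    substY0 K (monomial d c) = if d 1 = 0 then monomial d c else 0 := by
  rw [substY0, aeval_monomial, prod_fintype _ _ (by simp), Fin.prod_univ_two, if_pos rfl,
    if_neg one_ne_zero]
  split_ifs with h
  · rw [h, pow_zero, mul_one, algebraMap_eq, C_mul_X_pow_eq_monomial,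
      ← eq_single_zero_of_apply_one_eq_zero h]
  · simp [zero_pow h]

lemma coeff_single_zero_substY0 (f : MvPolynomial (Fin 2) K) (a : ℕ) :
    coeff (single 0 a) (substY0 K f) = coeff (single 0 a) f := by
  induction f using MvPolynomial.induction_on' with
  | monomial d c =>
    rw [substY0_monomial]
    split_ifs with h
    · rfl
    · rw [coeff_zero, coeff_monomial, if_neg]
      rintro rfl
      simp at h
  | add f g hf hg => rw [map_add, coeff_add, coeff_add, hf, hg]

lemma monomial_mem_Rsub {d : Fin 2 →₀ ℕ} (hd : d 1 ≠ 0) (c : K) : monomial d c ∈ Rsub K := by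
  rw [Rsub, Subalgebra.mem_comap, substY0_monomial, if_neg hd]
  exact zero_mem _

lemma coeff_eq_zero_of_mem_Rsub {f : MvPolynomial (Fin 2) K} (hf : f ∈ Rsub K)
    {p : Fin 2 →₀ ℕ} (hp1 : p 1 = 0) (hp : p ≠ 0) : coeff p f = 0 := by
  rw [Rsub, Subalgebra.mem_comap, Algebra.mem_bot] at hf
  obtain ⟨c, hc⟩ := hf
  rw [eq_single_zero_of_apply_one_eq_zero hp1] at hp ⊢
  rw [← coeff_single_zero_substY0, ← hc, algebraMap_eq, coeff_C, if_neg (Ne.symm hp)]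

lemma coeff_mul_of_mem_Rsub {f g : MvPolynomial (Fin 2) K} (hf : f ∈ Rsub K) (hg : g ∈ Rsub K)
    (n : ℕ) :
    coeff (single 0 n + single 1 1) (f * g) =
      constantCoeff f * coeff (single 0 n + single 1 1) g +
        coeff (single 0 n + single 1 1) f * constantCoeff g := by
  set m : Fin 2 →₀ ℕ := single 0 n + single 1 1
  have hm : m ≠ 0 := fun h => by simpa [m] using congr($h 1)
  rw [coeff_mul, constantCoeff_eq, Finset.sum_eq_add (0, m) (m, 0) (by simp [hm])]
  · rintro ⟨p, q⟩ hpq hne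
    rw [Finset.HasAntidiagonal.mem_antidiagonal] at hpq
    have hp : p ≠ 0 := by rintro rfl; simp_all
    have hq : q ≠ 0 := by rintro rfl; simp_all
    have hpq1 : p 1 + q 1 = 1 := by simpa [m] using congr($hpq 1)
    rcases Nat.eq_zero_or_pos (p 1) with hp1 | hp1
    · rw [coeff_eq_zero_of_mem_Rsub hf hp1 hp, zero_mul]
    · rw [coeff_eq_zero_of_mem_Rsub hg (by omega) hq, mul_zero]
  all_goals simp

variable (K) in
def Rsub.coeffKer (n : ℕ) : Subalgebra K (MvPolynomial (Fin 2) K) where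
  carrier := {f | f ∈ Rsub K ∧ coeff (single 0 n + single 1 1) f = 0}
  mul_mem' := by
    rintro f g ⟨hf, hf0⟩ ⟨hg, hg0⟩
    refine ⟨mul_mem hf hg, ?_⟩
    rw [coeff_mul_of_mem_Rsub hf hg, hf0, hg0, mul_zero, zero_mul, add_zero]
  add_mem' := by
    rintro f g ⟨hf, hf0⟩ ⟨hg, hg0⟩
    exact ⟨add_mem hf hg, by rw [coeff_add, hf0, hg0, add_zero]⟩
  algebraMap_mem' c := by
    refine ⟨Subalgebra.algebraMap_mem _ c, ?_⟩
    rw [algebraMap_eq, coeff_C, if_neg]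
    intro h
    simpa using congr($h 1)

end

/-- The subalgebra `R = K·1 + y·K[x,y]` of `K[x,y]` is not finitely generated as a
`K`-algebra.  (This algebra is the Hochschild cohomology ring modulo nilpotence of
Xu's counterexample algebra.) -/
theorem Rsub_not_finiteType (K : Type*) [Field K] :
    ¬ Algebra.FiniteType K (Rsub K) := by
  intro h
  obtain ⟨s, hs⟩ := (Subalgebra.fg_iff_finiteType (Rsub K)).mpr h
  set N := s.sup (degreeOf 0) + 1
  have hle : Rsub K ≤ Rsub.coeffKer K N := hs ▸ Algebra.adjoin_le fun g hg =>
    ⟨hs ▸ Algebra.subset_adjoin hg, MvPolynomial.notMem_support_iff.mp <|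
      notMem_support_of_degreeOf_lt 0 (by simpa [N] using Nat.lt_succ_of_le (Finset.le_sup hg))⟩
  have hmem := hle (monomial_mem_Rsub (d := single 0 N + single 1 1) (by simp) (1 : K))
  simpa using hmem.2
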